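/- arXiv:1903.06245 — 2 statements merged into one kernel-verified Lean document; each statement's English description precedes it below -/
import Mathlib

section
/- Let p be a prime, let G be a finite p-group, and let d be an integer with 2 ≤ d ≤ p−1. If γ_{d+2}(G) ≤ (G')^p, then γ_{p−1}(G') ≤ (G')^p; that is, G' is potent. -/
/-!
STATEMENT 13: Let p be a prime, let G be a finite p-group, and let d be an
integer with 2 ≤ d ≤ p−1.  If γ_{d+2}(G) ≤ (G')^p, then γ_{p−1}(G') ≤ (G')^p;
that is, G' is potent.

Here γ_j(G) = lowerCentralSeries G (j-1), (G')^p = `sgPow (commutator G) p`,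
and γ_{p-1}(G') is the (p-1)-st term of the lower central series of the
subgroup G' computed inside G, namely `lcsIn (commutator G) (p - 2)` where
`lcsIn H j` is defined by lcsIn H 0 = H and lcsIn H (j+1) = ⁅lcsIn H j, H⁆.
-/

/-- The subgroup `⟨h^n : h ∈ H⟩` generated by the `n`-th powers of elements of `H`. -/
def sgPow {G : Type*} [Group G] (H : Subgroup G) (n : ℕ) : Subgroup G :=
  Subgroup.closure ((· ^ n) '' (H : Set G))

/-- The lower central series of the subgroup `H`, computed inside `G`:
`lcsIn H j` is γ_{j+1}(H) as a subgroup of `G`. -/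
def lcsIn {G : Type*} [Group G] (H : Subgroup G) : ℕ → Subgroup G
  | 0 => H
  | j + 1 => ⁅lcsIn H j, H⁆

/-!
The lower central series satisfies `⁅γ_i(G), γ_j(G)⁆ ≤ γ_{i+j}(G)` (three subgroups lemma), so
`γ_{p-1}(G') ≤ γ_{2p-2}(G)`. Since `d ≤ p - 1` and `p ≥ 3`, we have `d + 2 ≤ 2p - 2`, hence
`γ_{p-1}(G') ≤ γ_{d+2}(G) ≤ (G')^p`.
-/

namespace Subgroup

variable {G : Type*} [Group G]

theorem commutator_commutator_le_of_rotate {H₁ H₂ H₃ N : Subgroup G} [N.Normal]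
    (h1 : ⁅⁅H₂, H₃⁆, H₁⁆ ≤ N) (h2 : ⁅⁅H₃, H₁⁆, H₂⁆ ≤ N) : ⁅⁅H₁, H₂⁆, H₃⁆ ≤ N := by
  have le_iff : ∀ A B : Subgroup G,
      ⁅A, B⁆ ≤ N ↔ ⁅A.map (QuotientGroup.mk' N), B.map (QuotientGroup.mk' N)⁆ = ⊥ := by
    intro A B
    rw [← map_commutator, map_eq_bot_iff, QuotientGroup.ker_mk']
  simp only [le_iff, map_commutator] at h1 h2 ⊢
  exact commutator_commutator_eq_bot_of_rotate h1 h2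

theorem commutator_lowerCentralSeries_le (m n : ℕ) :
    ⁅(⊤ : Subgroup G).lowerCentralSeries m, (⊤ : Subgroup G).lowerCentralSeries n⁆ ≤
      (⊤ : Subgroup G).lowerCentralSeries (m + n + 1) := by
  induction n generalizing m with
  | zero => rfl
  | succ n ih =>
    rw [commutator_comm, lowerCentralSeries_succ]
    apply commutator_commutator_le_of_rotate
    · rw [commutator_comm ⊤, ← lowerCentralSeries_succ, ← Nat.add_assoc, Nat.add_right_comm m]
      exact ih (m + 1)
    · rw [← Nat.add_assoc, lowerCentralSeries_succ]
      exact commutator_mono (ih m) le_rfl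

theorem lcsIn_le_lowerCentralSeries {H : Subgroup G} {k : ℕ}
    (hH : H ≤ (⊤ : Subgroup G).lowerCentralSeries k) (j : ℕ) :
    lcsIn H j ≤ (⊤ : Subgroup G).lowerCentralSeries (k * j + k + j) := by
  induction j with
  | zero => simpa [lcsIn] using hH
  | succ j ih =>
    calc lcsIn H (j + 1) = ⁅lcsIn H j, H⁆ := rfl
      _ ≤ (⊤ : Subgroup G).lowerCentralSeries (k * j + k + j + k + 1) :=
        (commutator_mono ih hH).trans (commutator_lowerCentralSeries_le _ _)
      _ = (⊤ : Subgroup G).lowerCentralSeries (k * (j + 1) + k + (j + 1)) := by ring_nf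

end Subgroup

theorem derived_subgroup_potent_general
    {p : ℕ}
    {G : Type*} [Group G]
    (d : ℕ) (hd2 : 2 ≤ d) (hdp : d ≤ p - 1)
    (hγ : (⊤ : Subgroup G).lowerCentralSeries (d + 1) ≤ sgPow (commutator G) p) :
    lcsIn (commutator G) (p - 2) ≤ sgPow (commutator G) p :=
  calc lcsIn (commutator G) (p - 2)
      ≤ (⊤ : Subgroup G).lowerCentralSeries (1 * (p - 2) + 1 + (p - 2)) :=
        Subgroup.lcsIn_le_lowerCentralSeries Subgroup.top_lowerCentralSeries_one.ge _
    _ ≤ (⊤ : Subgroup G).lowerCentralSeries (d + 1) := Subgroup.lowerCentralSeries_antitone _ (by omega)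
    _ ≤ sgPow (commutator G) p := hγ

theorem derived_subgroup_potent
    {p : ℕ} (hp : p.Prime)
    {G : Type*} [Group G] [Finite G] (hG : IsPGroup p G)
    (d : ℕ) (hd2 : 2 ≤ d) (hdp : d ≤ p - 1)
    (hγ : (⊤ : Subgroup G).lowerCentralSeries (d + 1) ≤ sgPow (commutator G) p) :
    lcsIn (commutator G) (p - 2) ≤ sgPow (commutator G) p :=
  derived_subgroup_potent_general d hd2 hdp hγ
end

section
/- Let G be a powerful finite p-group with p odd, and let N ≤ L be subgroups of G with G^p ≤ N. Then for every i ≥ 0 one has |L^{p^i} : N^{p^i}| ≤ |L : N|, and if L/N is generated by the images of x_1, …, x_n ∈ L, then L^{p^i}/N^{p^i} is generated by the images of x_1^{p^i}, …, x_n^{p^i}. -/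
open Subgroup
open scoped commutatorElement

section SgPow

variable {G : Type*} [Group G] {H K M : Subgroup G} {m n : ℕ}

theorem sgPow_le_iff : sgPow H n ≤ K ↔ ∀ a ∈ H, a ^ n ∈ K := by
  rw [sgPow, closure_le, Set.image_subset_iff]
  rfl

theorem pow_mem_sgPow {a : G} (ha : a ∈ H) (n : ℕ) : a ^ n ∈ sgPow H n :=
  subset_closure ⟨a, ha, rfl⟩

theorem sgPow_mono (h : H ≤ K) (n : ℕ) : sgPow H n ≤ sgPow K n :=
  closure_mono (Set.image_mono h)

theorem sgPow_le_self (H : Subgroup G) (n : ℕ) : sgPow H n ≤ H :=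
  sgPow_le_iff.mpr fun _ ha => pow_mem ha n

@[simp]
theorem sgPow_one (H : Subgroup G) : sgPow H 1 = H := by
  simp [sgPow]

@[simp]
theorem sgPow_bot (n : ℕ) : sgPow (⊥ : Subgroup G) n = ⊥ := by
  simp [sgPow]

theorem sgPow_mul_le (h : sgPow H m ≤ K) (n : ℕ) : sgPow H (m * n) ≤ sgPow K n :=
  sgPow_le_iff.mpr fun a ha => pow_mul a m n ▸ pow_mem_sgPow (h (pow_mem_sgPow ha m)) n

theorem sgPow_top_pow_succ_le {p : ℕ} (h : sgPow ⊤ p ≤ K) (i : ℕ) :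
    sgPow ⊤ (p ^ (i + 1)) ≤ sgPow K (p ^ i) :=
  pow_succ' p i ▸ sgPow_mul_le h _

instance sgPow_normal [hH : H.Normal] : (sgPow H n).Normal where
  conj_mem _ hx g := by
    have : sgPow H n ≤ (sgPow H n).comap (MulAut.conj g).toMonoidHom :=
      sgPow_le_iff.mpr fun a ha => by
        simpa [conj_pow] using pow_mem_sgPow (hH.conj_mem a ha g) n
    exact this hx

theorem sgPow_pow_le_iterate_sgPow (H : Subgroup G) (n m : ℕ) :
    sgPow H (n ^ m) ≤ (sgPow · n)^[m] H := by
  induction m with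
  | zero => simp
  | succ m ih =>
    rw [pow_succ, Function.iterate_succ_apply']
    exact sgPow_mul_le ih n

theorem sgPow_sgPow_le_sup [M.Normal] (hHK : sgPow H m ≤ K)
    (hmul : ∀ (u : G), ∀ v ∈ K, ((u : G ⧸ M) * v) ^ n = (u : G ⧸ M) ^ n * (v : G ⧸ M) ^ n) :
    sgPow (sgPow H m) n ≤ sgPow H (m * n) ⊔ M := by
  refine sgPow_le_iff.mpr fun a ha => ?_
  induction ha using closure_induction with
  | mem _ hx =>
    obtain ⟨b, hb, rfl⟩ := hx
    exact mem_sup_left (by simpa [← pow_mul] using pow_mem_sgPow hb (m * n))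
  | one => simp
  | mul a b ha hb iha ihb =>
    have hab : (a ^ n * b ^ n)⁻¹ * (a * b) ^ n ∈ M :=
      QuotientGroup.eq.mp (by simpa using (hmul a b (hHK hb)).symm)
    rw [← mul_inv_cancel_left (a ^ n * b ^ n) ((a * b) ^ n)]
    exact mul_mem (mul_mem iha ihb) (mem_sup_right hab)
  | inv a _ ih => simpa using inv_mem ih

theorem dvd_choose_two_of_odd {p : ℕ} (hodd : Odd p) : p ∣ p.choose 2 := by
  obtain ⟨k, rfl⟩ := hodd
  exact ⟨k, by
    rw [Nat.choose_two_right, Nat.add_sub_cancel, mul_comm 2 k, ← mul_assoc,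
      Nat.mul_div_cancel _ two_pos]⟩

theorem pow_choose_two_mem_sgPow {p : ℕ} (hodd : Odd p) {z : G} (hz : z ∈ K) :
    z ^ p.choose 2 ∈ sgPow K p := by
  obtain ⟨t, ht⟩ := dvd_choose_two_of_odd hodd
  rw [ht, pow_mul]
  exact pow_mem (pow_mem_sgPow hz p) t

end SgPow

section Commutator

variable {G : Type*} [Group G]

theorem pow_mul_eq_of_commutator_mem_center {u v : G} (h : ⁅v, u⁆ ∈ center G) (k : ℕ) :
    v ^ k * u = u * v ^ k * ⁅v, u⁆ ^ k := by
  have hz : ∀ g, Commute ⁅v, u⁆ g := fun g => ((mem_center_iff.mp h) g).symm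
  induction k with
  | zero => simp
  | succ k ih =>
    calc v ^ (k + 1) * u = ⁅v, u⁆ * (u * v) * v ^ k * ⁅v, u⁆ ^ k := by
          rw [pow_succ', mul_assoc, ih, commutatorElement_def]; group
      _ = u * v * (⁅v, u⁆ * v ^ k) * ⁅v, u⁆ ^ k := by rw [(hz (u * v)).eq]; group
      _ = u * v ^ (k + 1) * ⁅v, u⁆ ^ (k + 1) := by
          rw [(hz (v ^ k)).eq, pow_succ' v, pow_succ' ⁅v, u⁆]; simp only [mul_assoc]

theorem mul_pow_of_commutator_mem_center {u v : G} (h : ⁅v, u⁆ ∈ center G) (k : ℕ) :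
    (u * v) ^ k = u ^ k * v ^ k * ⁅v, u⁆ ^ k.choose 2 := by
  have hz : ∀ (n : ℕ) (g : G), Commute (⁅v, u⁆ ^ n) g :=
    fun n g => (show Commute ⁅v, u⁆ g from ((mem_center_iff.mp h) g).symm).pow_left n
  induction k with
  | zero => simp
  | succ k ih =>
    calc (u * v) ^ (k + 1) = u ^ k * (v ^ k * u) * v * ⁅v, u⁆ ^ k.choose 2 := by
          rw [pow_succ, ih, mul_assoc, (hz _ _).eq]; group
      _ = u ^ k * (u * v ^ k) * (⁅v, u⁆ ^ k * v) * ⁅v, u⁆ ^ k.choose 2 := by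
          rw [pow_mul_eq_of_commutator_mem_center h]; group
      _ = u ^ (k + 1) * v ^ (k + 1) * ⁅v, u⁆ ^ (k + k.choose 2) := by
          rw [(hz k v).eq, pow_add]; group
      _ = u ^ (k + 1) * v ^ (k + 1) * ⁅v, u⁆ ^ (k + 1).choose 2 := by
          rw [Nat.choose_succ_succ, Nat.choose_one_right]

theorem commutator_pow_left_of_mem_center {x g : G} (h : ⁅⁅x, g⁆, x⁻¹⁆ ∈ center G) (k : ℕ) :
    ⁅x ^ k, g⁆ = ⁅x, g⁆ ^ k * ⁅⁅x, g⁆, x⁻¹⁆ ^ k.choose 2 := by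
  have hconj : ⁅x ^ k, g⁆ = x ^ k * (x⁻¹ * ⁅x, g⁆) ^ k := by
    rw [show x⁻¹ * ⁅x, g⁆ = g * x⁻¹ * g⁻¹ by rw [commutatorElement_def]; group, conj_pow,
      commutatorElement_def, inv_pow]
    group
  rw [hconj, mul_pow_of_commutator_mem_center h, inv_pow, ← mul_assoc, ← mul_assoc, mul_inv_cancel,
    one_mul]

theorem commutator_top_le_iff {H M : Subgroup G} [M.Normal] :
    ⁅H, ⊤⁆ ≤ M ↔ H ≤ Subgroup.upperCentralSeriesStep M :=
  ⟨fun h x hx y => commutator_le.mp h x hx y (mem_top y),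
    fun h => commutator_le.mpr fun _ hx y _ => h hx y⟩

theorem mk_commutatorElement {M : Subgroup G} [M.Normal] (a b : G) :
    ((⁅a, b⁆ : G) : G ⧸ M) = ⁅(a : G ⧸ M), (b : G ⧸ M)⁆ :=
  map_commutatorElement (QuotientGroup.mk' M) a b

theorem mk_mem_center_iff {M : Subgroup G} [M.Normal] {z : G} :
    (z : G ⧸ M) ∈ center (G ⧸ M) ↔ z ∈ Subgroup.upperCentralSeriesStep M := by
  rw [Subgroup.upperCentralSeriesStep_eq_comap_center]; rfl

theorem le_of_le_sup_commutator [Group.IsNilpotent G] {X Y : Subgroup G} [Y.Normal]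
    (h : X ≤ Y ⊔ ⁅X, ⊤⁆) : X ≤ Y := by
  have hlcs : ∀ j, X ≤ Y ⊔ (⊤ : Subgroup G).lowerCentralSeries j := by
    intro j
    induction j with
    | zero => simp
    | succ j ih =>
      refine h.trans (sup_le le_sup_left ?_)
      rw [commutator_top_le_iff]
      refine ih.trans (sup_le ?_ ?_) <;> rw [← commutator_top_le_iff]
      · exact (commutator_le_left Y ⊤).trans le_sup_left
      · exact le_sup_right
  obtain ⟨n, hn⟩ := Subgroup.nilpotent_iff_lowerCentralSeries.mp ‹_›
  simpa [hn] using hlcs n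

end Commutator

section PGroup

variable {G : Type*} [Group G] [Finite G] {p : ℕ}

theorem sgPow_lt_self (hp : p.Prime) (hG : IsPGroup p G) {K : Subgroup G} (hK : K ≠ ⊥) :
    sgPow K p < K := by
  -- `K` has a subgroup of index `p`; it is normal, so it contains every `p`-th power.
  have := Fact.mk hp
  obtain ⟨k, hk⟩ := (hG.to_subgroup K).exists_card_eq
  obtain ⟨k, rfl⟩ : ∃ j, k = j + 1 :=
    Nat.exists_eq_add_one.mpr (Nat.pos_of_ne_zero fun h => hK (card_eq_one.mp (by simp [hk, h])))
  obtain ⟨H, hH⟩ := Sylow.exists_subgroup_card_pow_prime p (G := K) (n := k)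
    (hk ▸ pow_dvd_pow p k.le_succ)
  have hindex : H.index = p := by
    have := H.card_mul_index
    rw [hH, hk, pow_succ] at this
    exact Nat.eq_of_mul_eq_mul_left (pow_pos hp.pos k) this
  have : H.Normal :=
    normal_of_index_eq_minFac_card (by rw [hindex, hk, hp.pow_minFac k.succ_ne_zero])
  calc sgPow K p ≤ H.map K.subtype :=
        sgPow_le_iff.mpr fun a ha => ⟨_, hindex ▸ H.pow_index_mem ⟨a, ha⟩, rfl⟩
    _ < K := by
      conv_rhs => rw [← K.range_subtype, MonoidHom.range_eq_map]
      exact map_subtype_lt_map_subtype.mpr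
        (lt_top_iff_ne_top.mpr fun h => hp.one_lt.ne' (by rw [← hindex, h, index_top]))

end PGroup

section Powerful

variable {G : Type*} [Group G] {p : ℕ} {K : Subgroup G}

/-- `G` is powerful exactly when `IsPowerfullyEmbedded p (⊤ : Subgroup G)`, definitionally. -/
def IsPowerfullyEmbedded (p : ℕ) (K : Subgroup G) : Prop :=
  ⁅K, (⊤ : Subgroup G)⁆ ≤ sgPow K p

theorem IsPowerfullyEmbedded.normal (hK : IsPowerfullyEmbedded p K) : K.Normal :=
  commutator_top_right_le_iff.mp (hK.trans (sgPow_le_self K p))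

theorem IsPowerfullyEmbedded.commutator_sgPow_le (hodd : Odd p)
    (hK : IsPowerfullyEmbedded p K) {M : Subgroup G} [M.Normal] (hM : sgPow (sgPow K p) p ≤ M)
    (hM' : ⁅⁅sgPow K p, (⊤ : Subgroup G)⁆, (⊤ : Subgroup G)⁆ ≤ M) : ⁅sgPow K p, ⊤⁆ ≤ M := by
  have := hK.normal
  refine commutator_top_le_iff.mpr (sgPow_le_iff.mpr fun x hx g => ?_)
  have hc : ⁅x, g⁆ ∈ sgPow K p := hK (commutator_mem_commutator hx (mem_top g))
  have hz : ⁅⁅x, g⁆, x⁻¹⁆ ∈ ⁅sgPow K p, ⊤⁆ := commutator_mem_commutator hc (mem_top _)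
  have hcenter := mk_mem_center_iff.mpr (commutator_top_le_iff.mp hM' hz)
  have hc_pow : ((⁅x, g⁆ ^ p : G) : G ⧸ M) = 1 :=
    (QuotientGroup.eq_one_iff _).mpr (hM (pow_mem_sgPow hc p))
  have hz_pow : ((⁅⁅x, g⁆, x⁻¹⁆ ^ p.choose 2 : G) : G ⧸ M) = 1 :=
    (QuotientGroup.eq_one_iff _).mpr
      (hM (pow_choose_two_mem_sgPow hodd (commutator_le_left _ _ hz)))
  simp only [mk_commutatorElement, QuotientGroup.mk_pow, QuotientGroup.mk_inv]
    at hcenter hc_pow hz_pow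
  rw [← QuotientGroup.eq_one_iff, mk_commutatorElement, QuotientGroup.mk_pow,
    commutator_pow_left_of_mem_center hcenter, hc_pow, hz_pow, one_mul]

theorem isPowerfullyEmbedded_sgPow [Group.IsNilpotent G] (hodd : Odd p)
    (hK : IsPowerfullyEmbedded p K) : IsPowerfullyEmbedded p (sgPow K p) := by
  have := hK.normal
  exact le_of_le_sup_commutator (hK.commutator_sgPow_le hodd le_sup_left le_sup_right)

theorem IsPowerfullyEmbedded.iterate_sgPow [Group.IsNilpotent G] (hodd : Odd p)
    (hK : IsPowerfullyEmbedded p K) (m : ℕ) : IsPowerfullyEmbedded p ((sgPow · p)^[m] K) := by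
  induction m with
  | zero => exact hK
  | succ m ih =>
    rw [Function.iterate_succ_apply']
    exact isPowerfullyEmbedded_sgPow hodd ih

theorem IsPowerfullyEmbedded.mk_mul_pow [Group.IsNilpotent G] (hodd : Odd p)
    (hK : IsPowerfullyEmbedded p K) {M : Subgroup G} [M.Normal] (hM : sgPow (sgPow K p) p ≤ M)
    (u : G) {v : G} (hv : v ∈ K) :
    ((u : G ⧸ M) * v) ^ p = (u : G ⧸ M) ^ p * (v : G ⧸ M) ^ p := by
  have hz : ⁅v, u⁆ ∈ sgPow K p := hK (commutator_mem_commutator hv (mem_top u))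
  have hcenter := mk_mem_center_iff.mpr
    (commutator_top_le_iff.mp ((isPowerfullyEmbedded_sgPow hodd hK).trans hM) hz)
  have hz_pow : ((⁅v, u⁆ ^ p.choose 2 : G) : G ⧸ M) = 1 :=
    (QuotientGroup.eq_one_iff _).mpr (hM (pow_choose_two_mem_sgPow hodd hz))
  rw [mk_commutatorElement] at hcenter
  rw [QuotientGroup.mk_pow, mk_commutatorElement] at hz_pow
  rw [mul_pow_of_commutator_mem_center hcenter, hz_pow, mul_one]

theorem IsPowerfullyEmbedded.iterate_sgPow_le [Finite G] (hp : p.Prime) (hodd : Odd p)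
    (hG : IsPGroup p G) (hK : IsPowerfullyEmbedded p K) (m : ℕ) :
    (sgPow · p)^[m] K ≤ sgPow K (p ^ m) := by
  have := Fact.mk hp
  have := hG.isNilpotent
  induction K using WellFoundedLT.induction generalizing m with
  | ind K ih =>
    rcases eq_or_ne K ⊥ with rfl | hne
    · simp [Function.iterate_fixed (f := (sgPow · p)) (sgPow_bot p)]
    have ih' := ih _ (sgPow_lt_self hp hG hne) (isPowerfullyEmbedded_sgPow hodd hK)
    induction m with
    | zero => simp
    | succ m ihm =>
      have := (hK.iterate_sgPow hodd (m + 2)).normal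
      have hM : sgPow (sgPow ((sgPow · p)^[m] K) p) p ≤ (sgPow · p)^[m + 2] K := by
        simp only [Function.iterate_succ_apply']; rfl
      calc (sgPow · p)^[m + 1] K = sgPow ((sgPow · p)^[m] K) p :=
            Function.iterate_succ_apply' _ _ _
        _ ≤ sgPow (sgPow K (p ^ m)) p := sgPow_mono ihm p
        _ ≤ sgPow K (p ^ m * p) ⊔ (sgPow · p)^[m + 2] K :=
            sgPow_sgPow_le_sup (sgPow_pow_le_iterate_sgPow K p m)
              fun u _ hv => (hK.iterate_sgPow hodd m).mk_mul_pow hodd hM u hv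
        _ ≤ sgPow K (p ^ (m + 1)) := by
            refine sup_le (by rw [pow_succ]) ?_
            rw [Function.iterate_succ_apply]
            exact (ih' (m + 1)).trans (sgPow_mono (sgPow_le_self K p) _)

end Powerful

section MkPowHom

variable {G : Type*} [Group G]

def mkPowHom (M : Subgroup G) [M.Normal] (n : ℕ)
    (h : ∀ x y : G, (x ^ n * y ^ n)⁻¹ * (x * y) ^ n ∈ M) : G →* G ⧸ M :=
  MonoidHom.mk' (fun x => ((x ^ n : G) : G ⧸ M)) fun x y => by
    rw [← QuotientGroup.mk_mul]
    exact (QuotientGroup.eq.mpr (h x y)).symm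

variable {M : Subgroup G} [M.Normal] {n : ℕ} (h : ∀ x y : G, (x ^ n * y ^ n)⁻¹ * (x * y) ^ n ∈ M)

theorem map_mk_sgPow (L : Subgroup G) :
    (sgPow L n).map (QuotientGroup.mk' M) = L.map (mkPowHom M n h) := by
  rw [sgPow, MonoidHom.map_closure, Set.image_image]
  change closure (mkPowHom M n h '' L) = _
  rw [← MonoidHom.map_closure, closure_eq]

theorem le_ker_mkPowHom {N : Subgroup G} (hN : sgPow N n ≤ M) : N ≤ (mkPowHom M n h).ker :=
  fun _ hx => (QuotientGroup.eq_one_iff _).mpr (hN (pow_mem_sgPow hx n))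

end MkPowHom

section PowQuotient

open QuotientGroup

variable {G : Type*} [Group G] {N L : Subgroup G} [N.Normal] {n : ℕ}
  (h : ∀ x y : G, (x ^ n * y ^ n)⁻¹ * (x * y) ^ n ∈ sgPow N n)
include h

theorem relIndex_sgPow_le [N.FiniteIndex] :
    (sgPow N n).relIndex (sgPow L n) ≤ N.relIndex L :=
  calc (sgPow N n).relIndex (sgPow L n) = Nat.card ((sgPow L n).map (mk' (sgPow N n))) := by
        rw [← relIndex_ker, ker_mk']
    _ = (mkPowHom _ n h).ker.relIndex L := by rw [map_mk_sgPow h L, relIndex_ker]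
    _ ≤ N.relIndex L := relIndex_le_of_le_left (le_ker_mkPowHom h le_rfl)
      isFiniteRelIndex_of_finiteIndex.relIndex_ne_zero

theorem sgPow_eq_closure_sup {S : Set G} (hL : L = Subgroup.closure S ⊔ N) :
    sgPow L n = Subgroup.closure ((· ^ n) '' S) ⊔ sgPow N n := by
  have hNL : N ≤ L := hL ▸ le_sup_right
  refine map_injective_of_ker_le (mk' (sgPow N n)) (by rw [ker_mk']; exact sgPow_mono hNL n)
    (by rw [ker_mk']; exact le_sup_right) ?_
  rw [map_mk_sgPow h, hL, Subgroup.map_sup, Subgroup.map_sup,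
    (Subgroup.map_eq_bot_iff _).mpr (le_ker_mkPowHom h le_rfl),
    (Subgroup.map_eq_bot_iff _).mpr (ker_mk' _).ge, MonoidHom.map_closure, MonoidHom.map_closure,
    Set.image_image]
  rfl

end PowQuotient

section PowerfulGroup

variable {G : Type*} [Group G] [Finite G] {p : ℕ} (hp : p.Prime) (hodd : Odd p)
  (hG : IsPGroup p G) (hpow : IsPowerfullyEmbedded p (⊤ : Subgroup G))
include hp hodd hG hpow

theorem sgPow_top_pow_eq_iterate (i : ℕ) :
    sgPow (⊤ : Subgroup G) (p ^ i) = (sgPow · p)^[i] ⊤ :=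
  le_antisymm (sgPow_pow_le_iterate_sgPow ⊤ p i) (hpow.iterate_sgPow_le hp hodd hG i)

theorem sgPow_sgPow_top_pow (i : ℕ) :
    sgPow (sgPow (⊤ : Subgroup G) (p ^ i)) p = sgPow ⊤ (p ^ (i + 1)) := by
  rw [sgPow_top_pow_eq_iterate hp hodd hG hpow, sgPow_top_pow_eq_iterate hp hodd hG hpow,
    Function.iterate_succ_apply']

theorem mk_mul_pow_of_mem_sgPow_top_pow {i : ℕ} {M : Subgroup G} [M.Normal]
    (hM : sgPow ⊤ (p ^ (i + 2)) ≤ M) (u : G) {v : G} (hv : v ∈ sgPow ⊤ (p ^ i)) :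
    ((u : G ⧸ M) * v) ^ p = (u : G ⧸ M) ^ p * (v : G ⧸ M) ^ p := by
  have := Fact.mk hp
  have := hG.isNilpotent
  refine IsPowerfullyEmbedded.mk_mul_pow hodd ?_ ?_ u hv
  · rw [sgPow_top_pow_eq_iterate hp hodd hG hpow]
    exact hpow.iterate_sgPow hodd i
  · rwa [sgPow_sgPow_top_pow hp hodd hG hpow, sgPow_sgPow_top_pow hp hodd hG hpow]

variable {N : Subgroup G} (hGN : sgPow ⊤ p ≤ N)
include hGN

theorem sgPow_sgPow_pow_le (i : ℕ) : sgPow (sgPow N (p ^ i)) p ≤ sgPow N (p ^ (i + 1)) := by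
  refine (sgPow_sgPow_le_sup (K := sgPow ⊤ (p ^ i)) (M := sgPow ⊤ (p ^ (i + 2)))
    (sgPow_mono le_top _) fun u _ hv =>
      mk_mul_pow_of_mem_sgPow_top_pow hp hodd hG hpow le_rfl u hv).trans ?_
  rw [← pow_succ]
  exact sup_le le_rfl (sgPow_top_pow_succ_le hGN (i + 1))

theorem mul_pow_pow_mod_sgPow (i : ℕ) (x y : G) :
    (x ^ p ^ i * y ^ p ^ i)⁻¹ * (x * y) ^ p ^ i ∈ sgPow N (p ^ i) := by
  have : N.Normal := Normal.of_commutator_le _ (hpow.trans hGN)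
  induction i with
  | zero => simp
  | succ i ih =>
    set Q := G ⧸ sgPow N (p ^ (i + 1))
    set c := (x ^ p ^ i * y ^ p ^ i)⁻¹ * (x * y) ^ p ^ i
    have hM := sgPow_top_pow_succ_le hGN (i + 1)
    have hc_pow : (c : Q) ^ p = 1 := by
      rw [← QuotientGroup.mk_pow, QuotientGroup.eq_one_iff]
      exact sgPow_sgPow_pow_le hp hodd hG hpow hGN i (pow_mem_sgPow ih p)
    refine QuotientGroup.eq.mp (Eq.symm ?_)
    calc (((x * y) ^ p ^ (i + 1) : G) : Q) = (((x ^ p ^ i * y ^ p ^ i : G) : Q) * c) ^ p := by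
          rw [pow_succ, pow_mul, ← mul_inv_cancel_left (x ^ p ^ i * y ^ p ^ i) ((x * y) ^ p ^ i)]
          simp [c]
      _ = ((x ^ p ^ i : G) : Q) ^ p * ((y ^ p ^ i : G) : Q) ^ p := by
          rw [mk_mul_pow_of_mem_sgPow_top_pow hp hodd hG hpow hM _ (sgPow_mono le_top _ ih),
            hc_pow, mul_one, QuotientGroup.mk_mul,
            mk_mul_pow_of_mem_sgPow_top_pow hp hodd hG hpow hM _ (pow_mem_sgPow (mem_top y) _)]
      _ = ((x ^ p ^ (i + 1) * y ^ p ^ (i + 1) : G) : Q) := by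
          simp only [QuotientGroup.mk_mul, ← QuotientGroup.mk_pow, ← pow_mul, ← pow_succ]

end PowerfulGroup

theorem powerful_relindex_and_generators_general
    {p : ℕ} (hp : p.Prime) (hodd : Odd p)
    {G : Type*} [Group G] [Finite G] (hG : IsPGroup p G)
    (hpow : commutator G ≤ sgPow (⊤ : Subgroup G) p)
    (N L : Subgroup G) (hGN : sgPow (⊤ : Subgroup G) p ≤ N) :
    (∀ i : ℕ, (sgPow N (p ^ i)).relIndex (sgPow L (p ^ i)) ≤ N.relIndex L) ∧
    (∀ (i n : ℕ) (x : Fin n → G), (∀ j, x j ∈ L) →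
      L = Subgroup.closure (Set.range x) ⊔ N →
      sgPow L (p ^ i) = Subgroup.closure (Set.range fun j => x j ^ p ^ i) ⊔ sgPow N (p ^ i)) := by
  have : N.Normal := Normal.of_commutator_le _ (hpow.trans hGN)
  have hmul := mul_pow_pow_mod_sgPow hp hodd hG hpow hGN
  refine ⟨fun i => relIndex_sgPow_le (hmul i), fun i n x _ hgen => ?_⟩
  rw [sgPow_eq_closure_sup (hmul i) hgen, ← Set.range_comp]
  rfl

theorem powerful_relindex_and_generators
    {p : ℕ} (hp : p.Prime) (hodd : Odd p)
    {G : Type*} [Group G] [Finite G] (hG : IsPGroup p G)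
    (hpow : commutator G ≤ sgPow (⊤ : Subgroup G) p)
    (N L : Subgroup G) (hGN : sgPow (⊤ : Subgroup G) p ≤ N) (hNL : N ≤ L) :
    (∀ i : ℕ, (sgPow N (p ^ i)).relIndex (sgPow L (p ^ i)) ≤ N.relIndex L) ∧
    (∀ (i n : ℕ) (x : Fin n → G), (∀ j, x j ∈ L) →
      L = Subgroup.closure (Set.range x) ⊔ N →
      sgPow L (p ^ i) = Subgroup.closure (Set.range fun j => x j ^ p ^ i) ⊔ sgPow N (p ^ i)) :=
  powerful_relindex_and_generators_general hp hodd hG hpow N L hGN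
end
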